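/- Let f(x,y) = x² + y². The vector v = ((−1 + √−7)/4, (−1 + √−7)/4) in ℚ(√−7)² satisfies f_{(L,L)}(v) = v and f_{(R,R)}(v) = v, where both coordinates equal the root of 2y² + y + 1 = 0 with positive imaginary part. -/
import Mathlib

inductive LR | L | R

def step {K : Type*} (f : K × K → K) : LR → K × K → K × K
  | .L, p => (f p, p.2)
  | .R, p => (p.1, f p)

def iterLR {K : Type*} (f : K × K → K) : List LR → K × K → K × K
  | [], p => p
  | a :: t, p => iterLR f t (step f a p)

/-- For `f(x,y) = x² + y²`, the vector `v = (t,t)` with `t = (−1+√−7)/4` (the root of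
`2y² + y + 1` with positive imaginary part) satisfies `f_{(L,L)}(v) = v` and
`f_{(R,R)}(v) = v`. -/
theorem LL_RR_example :
    0 < ((-1 + Complex.I * Real.sqrt 7) / 4).im ∧
    2 * ((-1 + Complex.I * Real.sqrt 7) / 4) ^ 2 + (-1 + Complex.I * Real.sqrt 7) / 4 + 1 = 0 ∧
    iterLR (fun p : ℂ × ℂ => p.1 ^ 2 + p.2 ^ 2) [LR.L, LR.L]
        ((-1 + Complex.I * Real.sqrt 7) / 4, (-1 + Complex.I * Real.sqrt 7) / 4)
      = ((-1 + Complex.I * Real.sqrt 7) / 4, (-1 + Complex.I * Real.sqrt 7) / 4) ∧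
    iterLR (fun p : ℂ × ℂ => p.1 ^ 2 + p.2 ^ 2) [LR.R, LR.R]
        ((-1 + Complex.I * Real.sqrt 7) / 4, (-1 + Complex.I * Real.sqrt 7) / 4)
      = ((-1 + Complex.I * Real.sqrt 7) / 4, (-1 + Complex.I * Real.sqrt 7) / 4) := by
  have hs : (Real.sqrt 7 : ℂ) ^ 2 = 7 := by
    norm_cast
    rw [Real.sq_sqrt] <;> norm_num
  have h2 : 2 * ((-1 + Complex.I * Real.sqrt 7) / 4) ^ 2 +
      (-1 + Complex.I * Real.sqrt 7) / 4 + 1 = 0 := by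
    linear_combination (1/8 : ℂ) * (Real.sqrt 7 : ℂ)^2 * Complex.I_sq + (-(1/8) : ℂ) * hs
  refine ⟨?_, h2, ?_, ?_⟩
  · simp [Complex.div_im, Complex.add_im]
  · simp only [iterLR, step]
    refine Prod.ext ?_ rfl
    simp only
    linear_combination (2 * ((-1 + Complex.I * Real.sqrt 7) / 4) ^ 2 - (-1 + Complex.I * Real.sqrt 7) / 4) * h2
  · simp only [iterLR, step]
    refine Prod.ext rfl ?_
    simp only
    linear_combination (2 * ((-1 + Complex.I * Real.sqrt 7) / 4) ^ 2 - (-1 + Complex.I * Real.sqrt 7) / 4) * h2
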